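/- arXiv:1709.07649 — 3 statements merged into one kernel-verified Lean document; each statement's English description precedes it below -/
import Mathlib

section
/- Let n ≥ 2, let Γₙ⁻ be the subgroup of Aff(ℝⁿ) generated by the translations ℤⁿ × {Iₙ} together with (0, −Iₙ), and let (d,D) ∈ Aff(ℝⁿ) be such that ξ_{(d,D)} is an automorphism of Γₙ⁻ (so D ∈ GLₙ(ℤ) and 2d ∈ ℤⁿ). Then R(ξ_{(d,D)}) = (|det(Iₙ − D)|_∞ + |det(Iₙ + D)|_∞)/2 + O(Iₙ − D, 2d), computed in ℕ ∪ {∞}. -/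
/-!
Every element of `Γₙ⁻` is a translation `(z, I)` or a point reflection `(z, -I)` with `z ∈ ℤⁿ`,
and twisted conjugation `γ ↦ h γ ξ(h)⁻¹` preserves the type. On translations it moves `z` to
`z + (I - D)w` or `-z - 2d + (I - D)w`, on point reflections to `z + (I + D)w` or
`-z + 2d + (I + D)w`. Hence each type contributes the orbits of the involution `m ↦ c - m` of the
cokernel `ℤⁿ / Bℤⁿ`, `B = I ∓ D`, which has `|det B|_∞` elements. An involution has
`(|X| + |Fix|) / 2` orbits, and when `det B ≠ 0` the fixed points `2m = c` correspond to the
solutions of `B̄x = c̄` over `ℤ/2ℤ`. Since `I + D ≡ I - D` and `2d ≡ -2d` mod `2`, both types give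
the same `O(I - D, 2d)`.
-/

open Matrix

noncomputable section

@[ext]
structure Aff (n : ℕ) where
  tr : Fin n → ℝ
  lin : GL (Fin n) ℝ

namespace Aff

variable {n : ℕ}

instance : Mul (Aff n) :=
  ⟨fun a b => ⟨a.tr + (a.lin : Matrix (Fin n) (Fin n) ℝ) *ᵥ b.tr, a.lin * b.lin⟩⟩

instance : One (Aff n) := ⟨⟨0, 1⟩⟩

instance : Inv (Aff n) :=
  ⟨fun a => ⟨((a.lin⁻¹ : GL (Fin n) ℝ) : Matrix (Fin n) (Fin n) ℝ) *ᵥ (-a.tr), a.lin⁻¹⟩⟩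

theorem mul_def (a b : Aff n) :
    a * b = ⟨a.tr + (a.lin : Matrix (Fin n) (Fin n) ℝ) *ᵥ b.tr, a.lin * b.lin⟩ := rfl

theorem one_def : (1 : Aff n) = ⟨0, 1⟩ := rfl

theorem inv_def (a : Aff n) :
    a⁻¹ = ⟨((a.lin⁻¹ : GL (Fin n) ℝ) : Matrix (Fin n) (Fin n) ℝ) *ᵥ (-a.tr), a.lin⁻¹⟩ := rfl

instance : Group (Aff n) where
  mul_assoc a b c := by
    ext i
    · simp [mul_def, Matrix.mulVec_add, Matrix.mulVec_mulVec, add_assoc, Units.val_mul]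
    · simp [mul_def, mul_assoc]
  one_mul a := by
    ext i
    · simp [mul_def, one_def]
    · simp [mul_def, one_def]
  mul_one a := by
    ext i
    · simp [mul_def, one_def]
    · simp [mul_def, one_def]
  inv_mul_cancel a := by
    ext i
    · simp [mul_def, inv_def, one_def, Matrix.mulVec_neg]
    · simp [mul_def, inv_def, one_def]

end Aff

/-- The translation subgroup of `Γ` is exactly `ℤⁿ × {Iₙ}`. -/
def HasIntTranslations {n : ℕ} (Γ : Subgroup (Aff n)) : Prop :=
  ∀ v : Fin n → ℝ, (Aff.mk v 1 ∈ Γ ↔ ∃ z : Fin n → ℤ, v = fun i => (z i : ℝ))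

/-- The holonomy group of `Γ`, as the set of linear parts of elements of `Γ`. -/
def holonomy {n : ℕ} (Γ : Subgroup (Aff n)) : Set (GL (Fin n) ℝ) :=
  {D : GL (Fin n) ℝ | ∃ a : Fin n → ℝ, Aff.mk a D ∈ Γ}

/-- `D ∈ GLₙ(ℤ)`: both `D` and `D⁻¹` have integer entries. -/
def IsIntegralGL {n : ℕ} (D : GL (Fin n) ℝ) : Prop :=
  (∀ i j, ∃ z : ℤ, (D : Matrix (Fin n) (Fin n) ℝ) i j = (z : ℝ)) ∧
  (∀ i j, ∃ z : ℤ, ((D⁻¹ : GL (Fin n) ℝ) : Matrix (Fin n) (Fin n) ℝ) i j = (z : ℝ))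

/-- `Γ ≤ Aff(ℝⁿ)` is an `n`-dimensional crystallographic group. -/
def IsCrystallographic {n : ℕ} (Γ : Subgroup (Aff n)) : Prop :=
  HasIntTranslations Γ ∧ (holonomy Γ).Finite ∧ ∀ D ∈ holonomy Γ, IsIntegralGL D

/-- Conjugation by `g` maps `Γ` bijectively onto itself, i.e. `ξ_g` is an automorphism of `Γ`. -/
def XiIsAut {n : ℕ} (g : Aff n) (Γ : Subgroup (Aff n)) : Prop :=
  ∀ γ : Aff n, γ ∈ Γ ↔ g * γ * g⁻¹ ∈ Γ

def twistedConj {G : Type*} [Group G] (φ : G →* G) (g g' : G) : Prop :=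
  ∃ h : G, g = h * g' * (φ h)⁻¹

noncomputable def reidemeisterNumber {G : Type*} [Group G] (φ : G →* G) : ℕ∞ :=
  ENat.card (Quot (twistedConj φ))

noncomputable def reidemeisterSpectrum (G : Type*) [Group G] : Set ℕ∞ :=
  {r : ℕ∞ | ∃ φ : G ≃* G, reidemeisterNumber (φ : G →* G) = r}

/-- The automorphism `ξ_{(d,D)}` of `Γ`, given by conjugation by `g = (d,D)`. -/
def xi {n : ℕ} (g : Aff n) (Γ : Subgroup (Aff n)) (h : XiIsAut g Γ) : Γ →* Γ where
  toFun x := ⟨g * (x : Aff n) * g⁻¹, (h x).mp x.2⟩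
  map_one' := by
    apply Subtype.ext
    show g * ((1 : Γ) : Aff n) * g⁻¹ = ((1 : Γ) : Aff n)
    simp
  map_mul' x y := by
    apply Subtype.ext
    show g * ((x * y : Γ) : Aff n) * g⁻¹ =
      (g * (x : Aff n) * g⁻¹) * (g * (y : Aff n) * g⁻¹)
    simp only [Subgroup.coe_mul]
    group

/-- `|x|_∞` for an integer `x`. -/
def intAbsInfty (x : ℤ) : ℕ∞ := if x = 0 then ⊤ else (x.natAbs : ℕ∞)

/-- `O(B,b)`: the number of solutions over `ℤ/2ℤ` of `B̄ x = b̄`. -/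
noncomputable def Ocount {n : ℕ} (B : Matrix (Fin n) (Fin n) ℤ) (b : Fin n → ℤ) : ℕ :=
  Nat.card {x : Fin n → ZMod 2 // (B.map (Int.cast : ℤ → ZMod 2)) *ᵥ x = fun i => ((b i : ZMod 2))}

/-- The crystallographic group `Γₙ⁻ = ⟨ℤⁿ, (0, -Iₙ)⟩ ≤ Aff(ℝⁿ)`. -/
def GammaMinus (n : ℕ) : Subgroup (Aff n) :=
  Subgroup.closure
    ({g : Aff n | ∃ z : Fin n → ℤ, g = Aff.mk (fun i => (z i : ℝ)) 1} ∪ {Aff.mk 0 (-1)})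

section Involution

variable {α : Type*} {σ : α → α}

theorem quot_mk_eq_iff_of_involutive (hσ : Function.Involutive σ) (a b : α) :
    Quot.mk (fun x y => x = σ y) a = Quot.mk _ b ↔ a = b ∨ a = σ b := by
  rw [Quot.eq]
  constructor
  · intro h
    induction h with
    | rel x y hxy => exact Or.inr hxy
    | refl x => exact Or.inl rfl
    | symm x y _ ih =>
      rcases ih with rfl | rfl
      · exact Or.inl rfl
      · exact Or.inr (hσ y).symm
    | trans x y z _ _ ih₁ ih₂ =>
      rcases ih₁ with rfl | rfl <;> rcases ih₂ with rfl | rfl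
      · exact Or.inl rfl
      · exact Or.inr rfl
      · exact Or.inr rfl
      · exact Or.inl (hσ z)
  · rintro (rfl | h)
    · exact .refl _
    · exact .rel _ _ h

theorem finite_of_finite_quot_involutive (hσ : Function.Involutive σ)
    [Finite (Quot fun x y : α => x = σ y)] : Finite α := by
  refine Finite.of_surjective (fun p : Quot (fun x y : α => x = σ y) × Bool =>
    cond p.2 p.1.out (σ p.1.out)) fun a => ?_
  rcases (quot_mk_eq_iff_of_involutive hσ _ a).1 (Quot.out_eq (Quot.mk _ a)) with h | h
  · exact ⟨(Quot.mk _ a, true), h⟩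
  · exact ⟨(Quot.mk _ a, false), by simp [h, hσ _]⟩

theorem two_mul_natCard_quot_involutive [Finite α] (hσ : Function.Involutive σ) :
    2 * Nat.card (Quot fun x y : α => x = σ y) = Nat.card α + Nat.card {x // σ x = x} := by
  classical
  set r : α → α → Prop := fun x y => x = σ y
  have := Fintype.ofFinite α
  have := Fintype.ofFinite (Quot r)
  have hα : Fintype.card α = ∑ q : Quot r, ({x | Quot.mk r x = q} : Finset α).card := by
    rw [← Finset.card_univ,
      Finset.card_eq_sum_card_fiberwise (f := Quot.mk r) fun _ _ => Finset.mem_univ _]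
  have hfix : Fintype.card {x // σ x = x} =
      ∑ q : Quot r, ({x | σ x = x ∧ Quot.mk r x = q} : Finset α).card := by
    rw [Fintype.card_subtype,
      Finset.card_eq_sum_card_fiberwise (f := Quot.mk r) fun _ _ => Finset.mem_univ _]
    simp only [Finset.filter_filter]
  simp only [Nat.card_eq_fintype_card, hα, hfix, ← Finset.sum_add_distrib]
  rw [← Finset.card_univ, mul_comm, ← smul_eq_mul, ← Finset.sum_const]
  refine Finset.sum_congr rfl fun q _ => ?_
  obtain ⟨b, rfl⟩ := Quot.exists_rep q
  simp only [r, quot_mk_eq_iff_of_involutive hσ]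
  by_cases hb : σ b = b
  · have h₁ : ({x | x = b ∨ x = σ b} : Finset α) = {b} := by ext; simp [hb]
    have h₂ : ({x | σ x = x ∧ (x = b ∨ x = σ b)} : Finset α) = {b} := by
      ext; simp +contextual [hb]
    simp [h₁, h₂]
  · have h₁ : ({x | x = b ∨ x = σ b} : Finset α) = {b, σ b} := by ext; simp
    have h₂ : ({x | σ x = x ∧ (x = b ∨ x = σ b)} : Finset α) = ∅ := by
      ext x
      simp only [Finset.mem_filter, Finset.mem_univ, true_and, Finset.notMem_empty, iff_false]
      rintro ⟨hx, rfl | rfl⟩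
      exacts [hb hx, hb (by rw [hσ] at hx; exact hx.symm)]
    simp [h₁, h₂, Finset.card_pair (Ne.symm hb)]

theorem two_mul_card_quot_involutive (hσ : Function.Involutive σ) :
    2 * ENat.card (Quot fun x y : α => x = σ y) = ENat.card α + ENat.card {x // σ x = x} := by
  rcases finite_or_infinite α with hα | hα
  · have : Finite (Quot fun x y : α => x = σ y) := Quot.finite _
    simp only [ENat.card_eq_coe_natCard]
    exact_mod_cast two_mul_natCard_quot_involutive hσ
  · have : Infinite (Quot fun x y : α => x = σ y) := not_finite_iff_infinite.1 fun _ =>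
      not_finite_iff_infinite.2 hα (finite_of_finite_quot_involutive hσ)
    simp [ENat.card_eq_top_of_infinite]

end Involution

theorem ENat.card_quot_eq_of_surjective {α β : Type*} {r : α → α → Prop} {f : α → β}
    (hf : Function.Surjective f) (hr : ∀ a b, r a b ↔ f a = f b) :
    ENat.card (Quot r) = ENat.card β := by
  refine ENat.card_congr (Equiv.ofBijective (Quot.lift f fun a b h => (hr a b).1 h) ⟨?_, ?_⟩)
  · rintro ⟨a⟩ ⟨b⟩ h
    exact Quot.sound ((hr a b).2 h)
  · exact fun y => (hf y).imp' (Quot.mk r) fun a h => h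

section Cokernel

variable {n : ℕ}

abbrev Coker (B : Matrix (Fin n) (Fin n) ℤ) : Type := (Fin n → ℤ) ⧸ LinearMap.range B.mulVecLin

theorem natCard_coker {B : Matrix (Fin n) (Fin n) ℤ} (hB : B.det ≠ 0) :
    Nat.card (Coker B) = B.det.natAbs := by
  let e := LinearEquiv.ofInjective B.mulVecLin (Matrix.mulVec_injective_of_det_ne_zero hB)
  rw [← Submodule.natAbs_det_equiv _ e, ← LinearMap.det_toLin' B]
  rfl

theorem infinite_coker {B : Matrix (Fin n) (Fin n) ℤ} (hB : B.det = 0) : Infinite (Coker B) := by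
  obtain ⟨u, hu, huB⟩ := Matrix.exists_vecMul_eq_zero_iff.2 hB
  refine Infinite.of_injective (fun k : ℤ => Submodule.Quotient.mk (k • u)) fun k l hkl => ?_
  obtain ⟨w, hw⟩ := (Submodule.Quotient.eq _).1 hkl
  have : (k - l) * (u ⬝ᵥ u) = 0 := by
    rw [← smul_eq_mul, ← dotProduct_smul, sub_smul, ← hw]
    simp [Matrix.dotProduct_mulVec, huB]
  simpa [sub_eq_zero, dotProduct_self_eq_zero, hu] using this

theorem card_coker (B : Matrix (Fin n) (Fin n) ℤ) : ENat.card (Coker B) = intAbsInfty B.det := by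
  unfold intAbsInfty
  split_ifs with hB
  · have := infinite_coker hB
    exact ENat.card_eq_top_of_infinite
  · have : Finite (Coker B) := Nat.finite_of_card_ne_zero (by simp [natCard_coker hB, hB])
    rw [ENat.card_eq_coe_natCard, natCard_coker hB]

end Cokernel

section ReflectionClasses

variable {n : ℕ}

abbrev ReflectionClasses (B : Matrix (Fin n) (Fin n) ℤ) (c : Fin n → ℤ) : Type :=
  Quot fun x y : Coker B => x = Submodule.Quotient.mk c - y

def reflectionClass (B : Matrix (Fin n) (Fin n) ℤ) (c z : Fin n → ℤ) : ReflectionClasses B c :=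
  Quot.mk _ (Submodule.Quotient.mk z)

theorem reflectionClass_surjective (B : Matrix (Fin n) (Fin n) ℤ) (c : Fin n → ℤ) :
    Function.Surjective (reflectionClass B c) := by
  rintro ⟨m⟩
  obtain ⟨z, rfl⟩ := Submodule.Quotient.mk_surjective _ m
  exact ⟨z, rfl⟩

theorem reflectionClass_eq_iff {B : Matrix (Fin n) (Fin n) ℤ} {c z z' : Fin n → ℤ} :
    reflectionClass B c z = reflectionClass B c z' ↔
      ∃ w, z = z' + B *ᵥ w ∨ z = -z' + c + B *ᵥ w := by
  rw [reflectionClass, reflectionClass, quot_mk_eq_iff_of_involutive (const_sub_involutive _),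
    ← Submodule.Quotient.mk_sub, Submodule.Quotient.eq, Submodule.Quotient.eq,
    LinearMap.mem_range, LinearMap.mem_range, ← exists_or]
  refine exists_congr fun w => or_congr ?_ ?_ <;>
  · rw [Matrix.mulVecLin_apply]
    constructor <;> intro h <;> rw [h] <;> abel

theorem exists_eq_two_smul_iff (a : Fin n → ℤ) :
    (∃ v, a = 2 • v) ↔ ∀ i, ((a i : ℤ) : ZMod 2) = 0 := by
  refine ⟨?_, fun h => ⟨fun i => a i / 2, funext fun i => ?_⟩⟩
  · rintro ⟨v, rfl⟩ i
    simp [show (2 : ZMod 2) = 0 from rfl]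
  · exact (Int.mul_ediv_cancel' ((ZMod.intCast_zmod_eq_zero_iff_dvd _ 2).1 (h i))).symm

theorem mulVec_intCast_zmod (B : Matrix (Fin n) (Fin n) ℤ) (v : Fin n → ℤ) :
    B.map (Int.cast : ℤ → ZMod 2) *ᵥ (fun i => (v i : ZMod 2)) = fun i => ((B *ᵥ v) i : ZMod 2) :=
  funext fun i => (RingHom.map_mulVec (Int.castRingHom (ZMod 2)) B v i).symm

abbrev SolutionsModTwo (B : Matrix (Fin n) (Fin n) ℤ) (c : Fin n → ℤ) : Type :=
  {x : Fin n → ZMod 2 // B.map (Int.cast : ℤ → ZMod 2) *ᵥ x = fun i => (c i : ZMod 2)}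

/-- Both the fixed points `2m = c` of `Coker B` and `SolutionsModTwo B c` are quotients of this
type, by the same relation when `det B ≠ 0`. -/
abbrev Halving (B : Matrix (Fin n) (Fin n) ℤ) (c : Fin n → ℤ) : Type :=
  {p : (Fin n → ℤ) × (Fin n → ℤ) // 2 • p.1 + B *ᵥ p.2 = c}

namespace Halving

variable {B : Matrix (Fin n) (Fin n) ℤ} {c : Fin n → ℤ}

def toFixedPoint (p : Halving B c) :
    {m : Coker B // Submodule.Quotient.mk c - m = m} :=
  ⟨Submodule.Quotient.mk p.1.1, by
    obtain ⟨⟨z, w⟩, rfl⟩ := p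
    rw [← Submodule.Quotient.mk_sub, Submodule.Quotient.eq]
    exact ⟨w, by dsimp only; rw [Matrix.mulVecLin_apply, two_smul]; abel⟩⟩

def toSolutionModTwo (p : Halving B c) : SolutionsModTwo B c :=
  ⟨fun i => (p.1.2 i : ZMod 2), by
    obtain ⟨⟨z, w⟩, rfl⟩ := p
    rw [mulVec_intCast_zmod]
    funext i
    simp [show (2 : ZMod 2) = 0 from rfl]⟩

theorem toFixedPoint_surjective : Function.Surjective (toFixedPoint (B := B) (c := c)) := by
  rintro ⟨m, hm⟩
  obtain ⟨z, rfl⟩ := Submodule.Quotient.mk_surjective _ m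
  rw [← Submodule.Quotient.mk_sub, Submodule.Quotient.eq] at hm
  obtain ⟨w, hw⟩ := hm
  refine ⟨⟨(z, w), ?_⟩, rfl⟩
  rw [Matrix.mulVecLin_apply] at hw
  rw [hw, two_smul]
  abel

theorem toSolutionModTwo_surjective :
    Function.Surjective (toSolutionModTwo (B := B) (c := c)) := by
  rintro ⟨x, hx⟩
  let w : Fin n → ℤ := fun i => (x i).val
  have hw : (fun i => (w i : ZMod 2)) = x := funext fun i => by simp [w]
  obtain ⟨z, hz⟩ := (exists_eq_two_smul_iff (c - B *ᵥ w)).2 fun i => by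
    have := congrFun (mulVec_intCast_zmod B w) i
    rw [hw, hx] at this
    simp [this]
  exact ⟨⟨(z, w), by rw [← hz]; abel⟩, Subtype.ext hw⟩

theorem toFixedPoint_eq_iff (hB : B.det ≠ 0) (p q : Halving B c) :
    p.toFixedPoint = q.toFixedPoint ↔ p.toSolutionModTwo = q.toSolutionModTwo := by
  obtain ⟨⟨z, w⟩, hp⟩ := p
  obtain ⟨⟨z', w'⟩, hq⟩ := q
  have hB' : B *ᵥ (w' - w) = 2 • (z - z') := by
    rw [Matrix.mulVec_sub, smul_sub, eq_sub_of_add_eq' hp, eq_sub_of_add_eq' hq]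
    abel
  have hmod : toSolutionModTwo ⟨(z, w), hp⟩ = toSolutionModTwo ⟨(z', w'), hq⟩ ↔
      ∃ v, w' - w = 2 • v := by
    rw [exists_eq_two_smul_iff]
    simp only [toSolutionModTwo, Subtype.mk.injEq, funext_iff, Pi.sub_apply, Int.cast_sub,
      sub_eq_zero]
    exact forall_congr' fun _ => eq_comm
  simp only [hmod, toFixedPoint, Subtype.mk.injEq, Submodule.Quotient.eq, LinearMap.mem_range,
    Matrix.mulVecLin_apply]
  refine exists_congr fun v => ⟨fun hv => ?_, fun hv => ?_⟩
  · apply Matrix.mulVec_injective_of_det_ne_zero hB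
    rw [hB', Matrix.mulVec_smul, hv]
  · apply smul_right_injective _ (two_ne_zero : (2 : ℕ) ≠ 0)
    dsimp only
    rw [← hB', ← Matrix.mulVec_smul, hv]

end Halving

theorem card_fixedPoints_coker {B : Matrix (Fin n) (Fin n) ℤ} (hB : B.det ≠ 0) (c : Fin n → ℤ) :
    ENat.card {m : Coker B // Submodule.Quotient.mk c - m = m} = Ocount B c := by
  rw [← ENat.card_quot_eq_of_surjective Halving.toFixedPoint_surjective fun _ _ => Iff.rfl,
    ENat.card_quot_eq_of_surjective Halving.toSolutionModTwo_surjective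
      (Halving.toFixedPoint_eq_iff hB),
    ENat.card_eq_coe_natCard, Ocount]

theorem two_mul_card_reflectionClasses (B : Matrix (Fin n) (Fin n) ℤ) (c : Fin n → ℤ) :
    2 * ENat.card (ReflectionClasses B c) = intAbsInfty B.det + Ocount B c := by
  rw [two_mul_card_quot_involutive (const_sub_involutive _), card_coker]
  by_cases hB : B.det = 0
  · simp [intAbsInfty, hB]
  · rw [card_fixedPoints_coker hB]

theorem Ocount_congr {B B' : Matrix (Fin n) (Fin n) ℤ} {b b' : Fin n → ℤ}
    (hB : B.map (Int.cast : ℤ → ZMod 2) = B'.map Int.cast)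
    (hb : ∀ i, (b i : ZMod 2) = b' i) : Ocount B b = Ocount B' b' := by
  simp only [Ocount, hB, hb]

end ReflectionClasses

namespace Aff

variable {n : ℕ}

def translation (v : Fin n → ℝ) : Aff n := ⟨v, 1⟩

def pointReflection (v : Fin n → ℝ) : Aff n := ⟨v, -1⟩

@[simp] theorem translation_mul_translation (v w : Fin n → ℝ) :
    translation v * translation w = translation (v + w) := by
  simp [translation, mul_def]

@[simp] theorem translation_mul_pointReflection (v w : Fin n → ℝ) :
    translation v * pointReflection w = pointReflection (v + w) := by
  simp [translation, pointReflection, mul_def]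

@[simp] theorem pointReflection_mul_translation (v w : Fin n → ℝ) :
    pointReflection v * translation w = pointReflection (v - w) := by
  simp [translation, pointReflection, mul_def, Matrix.neg_mulVec, sub_eq_add_neg]

@[simp] theorem pointReflection_mul_pointReflection (v w : Fin n → ℝ) :
    pointReflection v * pointReflection w = translation (v - w) := by
  simp [translation, pointReflection, mul_def, Matrix.neg_mulVec, sub_eq_add_neg]

@[simp] theorem inv_translation (v : Fin n → ℝ) : (translation v)⁻¹ = translation (-v) := by
  simp [translation, inv_def]

@[simp] theorem inv_pointReflection (v : Fin n → ℝ) :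
    (pointReflection v)⁻¹ = pointReflection v := by
  simp [pointReflection, inv_def, Matrix.neg_mulVec]

theorem conj_translation (g : Aff n) (v : Fin n → ℝ) :
    g * translation v * g⁻¹ = translation ((g.lin : Matrix (Fin n) (Fin n) ℝ) *ᵥ v) := by
  simp [translation, mul_def, inv_def, Matrix.mulVec_mulVec]

theorem conj_pointReflection (g : Aff n) (v : Fin n → ℝ) :
    g * pointReflection v * g⁻¹ =
      pointReflection (2 • g.tr + (g.lin : Matrix (Fin n) (Fin n) ℝ) *ᵥ v) := by
  simp [pointReflection, mul_def, inv_def, Matrix.mulVec_mulVec, Matrix.neg_mulVec, two_smul]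
  abel

theorem translation_injective : Function.Injective (translation (n := n)) :=
  fun _ _ h => congrArg Aff.tr h

theorem pointReflection_injective : Function.Injective (pointReflection (n := n)) :=
  fun _ _ h => congrArg Aff.tr h

theorem translation_ne_pointReflection (hn : n ≠ 0) (v w : Fin n → ℝ) :
    translation v ≠ pointReflection w := by
  intro h
  have i : Fin n := ⟨0, Nat.pos_of_ne_zero hn⟩
  have := congrArg (fun a : Aff n => (a.lin : Matrix (Fin n) (Fin n) ℝ) i i) h
  norm_num [translation, pointReflection] at this

end Aff

section GammaMinus

open Aff

variable {n : ℕ}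

def intVec : (Fin n → ℤ) →+ (Fin n → ℝ) := (Int.castAddHom ℝ).compLeft (Fin n)

theorem intVec_injective : Function.Injective (intVec (n := n)) :=
  Int.cast_injective.comp_left

theorem mulVec_intVec (D : Matrix (Fin n) (Fin n) ℤ) (z : Fin n → ℤ) :
    D.map (Int.cast : ℤ → ℝ) *ᵥ intVec z = intVec (D *ᵥ z) :=
  funext fun i => (RingHom.map_mulVec (Int.castRingHom ℝ) D z i).symm

def gammaMinusElem : (Fin n → ℤ) ⊕ (Fin n → ℤ) → Aff n :=
  Sum.elim (translation ∘ intVec) (pointReflection ∘ intVec)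

theorem coe_gammaMinus : (GammaMinus n : Set (Aff n)) = Set.range gammaMinusElem := by
  apply subset_antisymm
  · intro γ hγ
    induction hγ using Subgroup.closure_induction with
    | mem γ hγ =>
      rcases hγ with ⟨z, rfl⟩ | rfl
      · exact ⟨.inl z, rfl⟩
      · exact ⟨.inr 0, by simp [gammaMinusElem, pointReflection]⟩
    | one => exact ⟨.inl 0, by simp [gammaMinusElem, translation, Aff.one_def]⟩
    | mul _ _ _ _ ha hb =>
      obtain ⟨a | a, rfl⟩ := ha <;> obtain ⟨b | b, rfl⟩ := hb
      exacts [⟨.inl (a + b), by simp [gammaMinusElem]⟩, ⟨.inr (a + b), by simp [gammaMinusElem]⟩,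
        ⟨.inr (a - b), by simp [gammaMinusElem]⟩, ⟨.inl (a - b), by simp [gammaMinusElem]⟩]
    | inv _ _ ha =>
      obtain ⟨a | a, rfl⟩ := ha
      exacts [⟨.inl (-a), by simp [gammaMinusElem]⟩, ⟨.inr a, by simp [gammaMinusElem]⟩]
  · rintro _ ⟨z | z, rfl⟩
    · exact Subgroup.subset_closure (.inl ⟨z, rfl⟩)
    · have : gammaMinusElem (.inr z) = translation (intVec z) * pointReflection 0 := by
        simp [gammaMinusElem]
      rw [this]
      exact mul_mem (Subgroup.subset_closure (.inl ⟨z, rfl⟩)) (Subgroup.subset_closure (.inr rfl))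

theorem gammaMinusElem_injective (hn : n ≠ 0) : Function.Injective (gammaMinusElem (n := n)) := by
  rintro (z | z) (z' | z') h <;>
    simp only [gammaMinusElem, Sum.elim_inl, Sum.elim_inr, Function.comp_apply] at h
  · exact congrArg _ (intVec_injective (translation_injective h))
  · exact absurd h (translation_ne_pointReflection hn _ _)
  · exact absurd h.symm (translation_ne_pointReflection hn _ _)
  · exact congrArg _ (intVec_injective (pointReflection_injective h))

def gammaMinusEquiv (hn : n ≠ 0) : (Fin n → ℤ) ⊕ (Fin n → ℤ) ≃ GammaMinus n :=
  (Equiv.ofInjective _ (gammaMinusElem_injective hn)).trans (Equiv.setCongr coe_gammaMinus.symm)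

end GammaMinus

theorem twistedConj_xi_iff {n : ℕ} {g : Aff n} {Γ : Subgroup (Aff n)} (hg : XiIsAut g Γ)
    (γ γ' : Γ) :
    twistedConj (xi g Γ hg) γ γ' ↔ ∃ h ∈ Γ, (γ : Aff n) = h * γ' * (g * h * g⁻¹)⁻¹ := by
  simp only [twistedConj, Subtype.ext_iff, Subgroup.coe_mul, Subgroup.coe_inv, Subtype.exists]
  exact exists_congr fun h => ⟨fun ⟨hh, e⟩ => ⟨hh, e⟩, fun ⟨hh, e⟩ => ⟨hh, e⟩⟩

section Twisted

open Aff

variable {n : ℕ} {g : Aff n} {DZ : Matrix (Fin n) (Fin n) ℤ} {dz : Fin n → ℤ}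

theorem conj_translation_intVec
    (hDZ : (g.lin : Matrix (Fin n) (Fin n) ℝ) = DZ.map (Int.cast : ℤ → ℝ)) (z : Fin n → ℤ) :
    g * translation (intVec z) * g⁻¹ = translation (intVec (DZ *ᵥ z)) := by
  rw [conj_translation, hDZ, mulVec_intVec]

theorem conj_pointReflection_intVec
    (hDZ : (g.lin : Matrix (Fin n) (Fin n) ℝ) = DZ.map (Int.cast : ℤ → ℝ))
    (hdz : ∀ i, (dz i : ℝ) = 2 * g.tr i) (z : Fin n → ℤ) :
    g * pointReflection (intVec z) * g⁻¹ = pointReflection (intVec (dz + DZ *ᵥ z)) := by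
  rw [conj_pointReflection, hDZ, mulVec_intVec, map_add]
  congr 2
  funext i
  simp [intVec, hdz]

variable (hDZ : (g.lin : Matrix (Fin n) (Fin n) ℝ) = DZ.map (Int.cast : ℤ → ℝ))
  (hdz : ∀ i, (dz i : ℝ) = 2 * g.tr i)
include hDZ

theorem twisted_translation_translation (w z : Fin n → ℤ) :
    translation (intVec w) * translation (intVec z) * (g * translation (intVec w) * g⁻¹)⁻¹ =
      translation (intVec (z + (1 - DZ) *ᵥ w)) := by
  rw [conj_translation_intVec hDZ]
  simp only [translation_mul_translation, inv_translation, ← map_neg, ← map_add]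
  congr 2
  rw [Matrix.sub_mulVec, Matrix.one_mulVec]
  abel

theorem twisted_translation_pointReflection (w z : Fin n → ℤ) :
    translation (intVec w) * pointReflection (intVec z) * (g * translation (intVec w) * g⁻¹)⁻¹ =
      pointReflection (intVec (z + (1 + DZ) *ᵥ w)) := by
  rw [conj_translation_intVec hDZ]
  simp only [translation_mul_pointReflection, inv_translation, pointReflection_mul_translation,
    ← map_neg, ← map_add, ← map_sub]
  congr 2
  rw [Matrix.add_mulVec, Matrix.one_mulVec]
  abel

include hdz

theorem twisted_pointReflection_translation (w z : Fin n → ℤ) :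
    pointReflection (intVec w) * translation (intVec z) *
        (g * pointReflection (intVec w) * g⁻¹)⁻¹ =
      translation (intVec (-z + -dz + (1 - DZ) *ᵥ w)) := by
  rw [conj_pointReflection_intVec hDZ hdz]
  simp only [pointReflection_mul_translation, inv_pointReflection,
    pointReflection_mul_pointReflection, ← map_sub]
  congr 2
  rw [Matrix.sub_mulVec, Matrix.one_mulVec]
  abel

theorem twisted_pointReflection_pointReflection (w z : Fin n → ℤ) :
    pointReflection (intVec w) * pointReflection (intVec z) *
        (g * pointReflection (intVec w) * g⁻¹)⁻¹ =
      pointReflection (intVec (-z + dz + (1 + DZ) *ᵥ w)) := by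
  rw [conj_pointReflection_intVec hDZ hdz]
  simp only [pointReflection_mul_pointReflection, inv_pointReflection,
    translation_mul_pointReflection, ← map_sub, ← map_add]
  congr 2
  rw [Matrix.add_mulVec, Matrix.one_mulVec]
  abel

end Twisted

section ReidemeisterNumber

open Aff

variable {n : ℕ} {g : Aff n} (hg : XiIsAut g (GammaMinus n)) {DZ : Matrix (Fin n) (Fin n) ℤ}
  (hDZ : (g.lin : Matrix (Fin n) (Fin n) ℝ) = DZ.map (Int.cast : ℤ → ℝ))
  {dz : Fin n → ℤ} (hdz : ∀ i, (dz i : ℝ) = 2 * g.tr i)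
include hDZ hdz

theorem twistedConj_gammaMinus_iff (hn : n ≠ 0) (a a' : (Fin n → ℤ) ⊕ (Fin n → ℤ)) :
    twistedConj (xi g (GammaMinus n) hg) (gammaMinusEquiv hn a) (gammaMinusEquiv hn a') ↔
      Sum.map (reflectionClass (1 - DZ) (-dz)) (reflectionClass (1 + DZ) dz) a =
        Sum.map (reflectionClass (1 - DZ) (-dz)) (reflectionClass (1 + DZ) dz) a' := by
  have he (b) : (gammaMinusEquiv hn b : Aff n) = gammaMinusElem b := rfl
  rw [twistedConj_xi_iff]
  simp only [← SetLike.mem_coe, coe_gammaMinus, Set.exists_range_iff, he]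
  rcases a with z | z <;> rcases a' with z' | z' <;>
    simp only [gammaMinusElem, Sum.exists, Sum.elim_inl, Sum.elim_inr, Function.comp_apply,
      twisted_translation_translation hDZ, twisted_translation_pointReflection hDZ,
      twisted_pointReflection_translation hDZ hdz, twisted_pointReflection_pointReflection hDZ hdz,
      Sum.map_inl, Sum.map_inr, translation_injective.eq_iff,
      pointReflection_injective.eq_iff, intVec_injective.eq_iff, ← exists_or, Sum.inl.injEq,
      Sum.inr.injEq, reflectionClass_eq_iff, translation_ne_pointReflection hn,
      (translation_ne_pointReflection hn _ _).symm, reduceCtorEq, or_self, exists_false]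

theorem reidemeisterNumber_xi_gammaMinus (hn : n ≠ 0) :
    reidemeisterNumber (xi g (GammaMinus n) hg) =
      ENat.card (ReflectionClasses (1 - DZ) (-dz)) + ENat.card (ReflectionClasses (1 + DZ) dz) := by
  let e := gammaMinusEquiv hn
  let π := Sum.map (reflectionClass (1 - DZ) (-dz)) (reflectionClass (1 + DZ) dz)
  have hπ : Function.Surjective π :=
    Sum.map_surjective.2 ⟨reflectionClass_surjective _ _, reflectionClass_surjective _ _⟩
  rw [reidemeisterNumber, ← ENat.card_sum]
  refine ENat.card_quot_eq_of_surjective (f := π ∘ e.symm) (hπ.comp e.symm.surjective) ?_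
  intro γ γ'
  obtain ⟨a, rfl⟩ := e.surjective γ
  obtain ⟨a', rfl⟩ := e.surjective γ'
  simpa [π] using twistedConj_gammaMinus_iff hg hDZ hdz hn a a'

end ReidemeisterNumber

/-- For `Γₙ⁻ = ⟨ℤⁿ, (0,-Iₙ)⟩`, `n ≥ 2`, and an automorphism `ξ_{(d,D)}` (so `D ∈ GLₙ(ℤ)`,
given by the integer matrix `DZ`, and `2d ∈ ℤⁿ`, given by the integer vector `dz`):
`R(ξ_{(d,D)}) = (|det(Iₙ - D)|_∞ + |det(Iₙ + D)|_∞)/2 + O(Iₙ - D, 2d)`, stated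
equivalently after multiplying through by `2`. -/
theorem stmt14 {n : ℕ} (hn : 2 ≤ n) (g : Aff n) (hg : XiIsAut g (GammaMinus n))
    (DZ : Matrix (Fin n) (Fin n) ℤ)
    (hDZ : (g.lin : Matrix (Fin n) (Fin n) ℝ) = DZ.map (Int.cast : ℤ → ℝ))
    (dz : Fin n → ℤ) (hdz : ∀ i, (dz i : ℝ) = 2 * g.tr i) :
    2 * reidemeisterNumber (xi g (GammaMinus n) hg) =
      intAbsInfty ((1 - DZ).det) + intAbsInfty ((1 + DZ).det) +
        2 * (Ocount (1 - DZ) dz : ℕ∞) := by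
  have hneg : Ocount (1 - DZ) (-dz) = Ocount (1 - DZ) dz :=
    Ocount_congr rfl fun i => by simp [CharTwo.neg_eq]
  have hplus : Ocount (1 + DZ) dz = Ocount (1 - DZ) dz :=
    Ocount_congr (by ext; simp [CharTwo.sub_eq_add]) fun _ => rfl
  rw [reidemeisterNumber_xi_gammaMinus hg hDZ hdz (by omega), mul_add,
    two_mul_card_reflectionClasses, two_mul_card_reflectionClasses, hneg, hplus]
  ring
end
end

section
/- Let n ≥ 2 and let Γₙ⁻ be the subgroup of Aff(ℝⁿ) generated by the translations ℤⁿ × {Iₙ} together with (0, −Iₙ). For (d,D) ∈ Aff(ℝⁿ), the map ξ_{(d,D)} : γ ↦ (d,D)γ(d,D)⁻¹ is an automorphism of Γₙ⁻ if and only if D ∈ GLₙ(ℤ) and 2d ∈ ℤⁿ; moreover every automorphism of Γₙ⁻ is of the form ξ_{(d,D)} for such a pair (d,D), so that Aut(Γₙ⁻) = {ξ_{(d,D)} : d ∈ (½ℤ)ⁿ, D ∈ GLₙ(ℤ)}. -/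
open Matrix

noncomputable section

/-- pointwise integer vector -/
def IntVec {n : ℕ} (v : Fin n → ℝ) : Prop := ∀ i, ∃ z : ℤ, v i = (z : ℝ)

theorem intVec_iff {n : ℕ} (v : Fin n → ℝ) :
    IntVec v ↔ ∃ z : Fin n → ℤ, v = fun i => (z i : ℝ) := by
  constructor
  · intro h
    choose z hz using h
    exact ⟨z, funext hz⟩
  · rintro ⟨z, rfl⟩ i; exact ⟨z i, rfl⟩

theorem IntVec.add {n : ℕ} {v w : Fin n → ℝ} (hv : IntVec v) (hw : IntVec w) :
    IntVec (v + w) := by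
  intro i
  obtain ⟨a, ha⟩ := hv i; obtain ⟨b, hb⟩ := hw i
  exact ⟨a + b, by simp [ha, hb]⟩

theorem IntVec.neg {n : ℕ} {v : Fin n → ℝ} (hv : IntVec v) : IntVec (-v) := by
  intro i; obtain ⟨a, ha⟩ := hv i; exact ⟨-a, by simp [ha]⟩

theorem IntVec.mulVec {n : ℕ} {M : Matrix (Fin n) (Fin n) ℝ}
    (hM : ∀ i j, ∃ z : ℤ, M i j = (z : ℝ)) {v : Fin n → ℝ} (hv : IntVec v) :
    IntVec (M *ᵥ v) := by
  intro i
  choose z hz using hM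
  choose w hw using hv
  refine ⟨∑ j, z i j * w j, ?_⟩
  simp [Matrix.mulVec, dotProduct, hz, hw]

theorem negOne_val {n : ℕ} : ((-1 : GL (Fin n) ℝ) : Matrix (Fin n) (Fin n) ℝ) = -1 := by
  simp

theorem negOne_inv {n : ℕ} : ((-1 : GL (Fin n) ℝ))⁻¹ = -1 := by
  simp

def FullGroup (n : ℕ) : Subgroup (Aff n) where
  carrier := {γ | IntVec γ.tr ∧ (γ.lin = 1 ∨ γ.lin = -1)}
  mul_mem' := by
    rintro a b ⟨ha, hA⟩ ⟨hb, hB⟩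
    constructor
    · show IntVec (a.tr + (a.lin : Matrix (Fin n) (Fin n) ℝ) *ᵥ b.tr)
      refine ha.add ?_
      rcases hA with h | h <;> rw [h]
      · simpa using hb
      · rw [negOne_val]
        simpa [Matrix.neg_mulVec] using hb.neg
    · show a.lin * b.lin = 1 ∨ a.lin * b.lin = -1
      rcases hA with h | h <;> rcases hB with h' | h' <;> simp [h, h']
  one_mem' := by
    refine ⟨?_, Or.inl rfl⟩
    intro i; exact ⟨0, by simp [Aff.one_def]⟩
  inv_mem' := by
    rintro a ⟨ha, hA⟩
    constructor
    · show IntVec (((a.lin⁻¹ : GL (Fin n) ℝ) : Matrix (Fin n) (Fin n) ℝ) *ᵥ (-a.tr))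
      rcases hA with h | h <;> rw [h]
      · simpa using ha.neg
      · rw [negOne_inv, negOne_val]
        simpa [Matrix.neg_mulVec] using ha.neg.neg
    · show a.lin⁻¹ = 1 ∨ a.lin⁻¹ = -1
      rcases hA with h | h <;> simp [h]

theorem mem_GammaMinus {n : ℕ} (γ : Aff n) :
    γ ∈ GammaMinus n ↔ IntVec γ.tr ∧ (γ.lin = 1 ∨ γ.lin = -1) := by
  constructor
  · intro h
    refine Subgroup.closure_le (K := FullGroup n) |>.mpr ?_ h
    rintro g (⟨z, rfl⟩ | rfl)
    · exact ⟨fun i => ⟨z i, rfl⟩, Or.inl rfl⟩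
    · exact ⟨fun i => ⟨0, by simp⟩, Or.inr rfl⟩
  · rintro ⟨hv, hA | hA⟩
    · apply Subgroup.subset_closure
      left
      obtain ⟨z, hz⟩ := (intVec_iff _).mp hv
      exact ⟨z, by cases γ; simp_all⟩
    · have h1 : Aff.mk γ.tr 1 ∈ GammaMinus n := by
        apply Subgroup.subset_closure
        left
        obtain ⟨z, hz⟩ := (intVec_iff _).mp hv
        exact ⟨z, by simp [hz]⟩
      have h2 : Aff.mk (0 : Fin n → ℝ) (-1) ∈ GammaMinus n :=
        Subgroup.subset_closure (Or.inr rfl)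
      have := mul_mem h1 h2
      convert this using 1
      cases γ
      simp_all [Aff.mul_def]

theorem conj_translation {n : ℕ} (g : Aff n) (v : Fin n → ℝ) :
    g * Aff.mk v 1 * g⁻¹ = Aff.mk ((g.lin : Matrix (Fin n) (Fin n) ℝ) *ᵥ v) 1 := by
  rw [mul_inv_eq_iff_eq_mul]
  ext i
  · simp [Aff.mul_def, add_comm]
  · simp [Aff.mul_def]

theorem conj_flip {n : ℕ} (g : Aff n) (v : Fin n → ℝ) :
    g * Aff.mk v (-1) * g⁻¹ =
      Aff.mk (g.tr + g.tr + (g.lin : Matrix (Fin n) (Fin n) ℝ) *ᵥ v) (-1) := by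
  rw [mul_inv_eq_iff_eq_mul]
  ext i
  · simp [Aff.mul_def, Units.val_neg, Matrix.neg_mulVec]
    ring
  · simp [Aff.mul_def]

theorem mulVec_indicator {n : ℕ} (M : Matrix (Fin n) (Fin n) ℝ) (j : Fin n) :
    M *ᵥ (fun k => if k = j then (1:ℝ) else 0) = fun i => M i j := by
  funext i
  simp [Matrix.mulVec, dotProduct]

theorem xiIsAut_inv {n : ℕ} {g : Aff n} {Γ : Subgroup (Aff n)} (h : XiIsAut g Γ) :
    XiIsAut g⁻¹ Γ := by
  intro γ
  have := (h (g⁻¹ * γ * g⁻¹⁻¹)).symm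
  convert this using 2
  group

theorem indicator_mem {n : ℕ} (j : Fin n) :
    Aff.mk (fun k => if k = j then (1:ℝ) else 0) 1 ∈ GammaMinus n := by
  rw [mem_GammaMinus]
  exact ⟨fun i => ⟨if i = j then 1 else 0, by by_cases h : i = j <;> simp [h]⟩, Or.inl rfl⟩

theorem flip_mem {n : ℕ} : Aff.mk (0 : Fin n → ℝ) (-1) ∈ GammaMinus n := by
  rw [mem_GammaMinus]
  exact ⟨fun i => ⟨0, by simp⟩, Or.inr rfl⟩

/-- forward: conjugation sends `Γ` into `Γ` under integrality conditions. -/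
theorem conj_mem {n : ℕ} {g : Aff n}
    (hD : ∀ i j, ∃ z : ℤ, (g.lin : Matrix (Fin n) (Fin n) ℝ) i j = (z : ℝ))
    (hd : ∀ i, ∃ z : ℤ, 2 * g.tr i = (z : ℝ))
    {γ : Aff n} (hγ : γ ∈ GammaMinus n) : g * γ * g⁻¹ ∈ GammaMinus n := by
  rw [mem_GammaMinus] at hγ
  obtain ⟨hv, hA | hA⟩ := hγ
  · obtain ⟨v, A⟩ := γ
    simp only at hA hv
    subst hA
    rw [conj_translation, mem_GammaMinus]
    exact ⟨hv.mulVec hD, Or.inl rfl⟩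
  · obtain ⟨v, A⟩ := γ
    simp only at hA hv
    subst hA
    rw [conj_flip, mem_GammaMinus]
    refine ⟨?_, Or.inr rfl⟩
    have h2 : IntVec (g.tr + g.tr) := by
      intro i
      obtain ⟨z, hz⟩ := hd i
      exact ⟨z, by simpa [two_mul] using hz⟩
    exact h2.add (hv.mulVec hD)

theorem inv_tr_cond {n : ℕ} {g : Aff n}
    (hDinv : ∀ i j, ∃ z : ℤ, ((g.lin⁻¹ : GL (Fin n) ℝ) : Matrix (Fin n) (Fin n) ℝ) i j = (z : ℝ))
    (hd : ∀ i, ∃ z : ℤ, 2 * g.tr i = (z : ℝ)) :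
    ∀ i, ∃ z : ℤ, 2 * (g⁻¹).tr i = (z : ℝ) := by
  intro i
  choose E hE using hDinv
  choose w hw using hd
  refine ⟨-∑ k, E i k * w k, ?_⟩
  have hA : ((g.lin⁻¹ : GL (Fin n) ℝ) : Matrix (Fin n) (Fin n) ℝ) =
      fun i j => ((E i j : ℝ)) := by funext i j; exact hE i j
  show 2 * ((((g.lin⁻¹ : GL (Fin n) ℝ) : Matrix (Fin n) (Fin n) ℝ)) *ᵥ (-g.tr)) i = _
  rw [hA]
  simp only [Matrix.mulVec, dotProduct, Pi.neg_apply]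
  rw [Finset.mul_sum]
  push_cast
  rw [← Finset.sum_neg_distrib]
  refine Finset.sum_congr rfl fun k _ => ?_
  linear_combination (-(E i k : ℝ)) * hw k

theorem part1 {n : ℕ} (hn : 2 ≤ n) (g : Aff n) : XiIsAut g (GammaMinus n) ↔
    (IsIntegralGL g.lin ∧ ∀ i, ∃ z : ℤ, 2 * g.tr i = (z : ℝ)) := by
  constructor
  · intro h
    have hd : ∀ i, ∃ z : ℤ, 2 * g.tr i = (z : ℝ) := by
      have := (h _).mp (flip_mem (n := n))
      rw [conj_flip, mem_GammaMinus] at this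
      intro i
      obtain ⟨z, hz⟩ := this.1 i
      refine ⟨z, ?_⟩
      rw [two_mul, ← hz]
      simp
    refine ⟨⟨?_, ?_⟩, hd⟩
    · intro i j
      have := (h _).mp (indicator_mem j)
      rw [conj_translation, mem_GammaMinus, mulVec_indicator] at this
      exact this.1 i
    · intro i j
      have := ((xiIsAut_inv h) _).mp (indicator_mem j)
      rw [conj_translation, mem_GammaMinus, mulVec_indicator] at this
      exact this.1 i
  · rintro ⟨⟨hD, hDinv⟩, hd⟩
    intro γ
    constructor
    · exact conj_mem hD hd
    · intro h
      have hinv := conj_mem (g := g⁻¹) hDinv (inv_tr_cond hDinv hd) h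
      convert hinv using 1
      group

theorem negOne_ne_one {n : ℕ} (hn : 2 ≤ n) : (-1 : GL (Fin n) ℝ) ≠ 1 := by
  intro h
  have h0 : (0 : ℕ) < n := by omega
  have := congrArg (fun u => ((u : GL (Fin n) ℝ) : Matrix (Fin n) (Fin n) ℝ) ⟨0, h0⟩ ⟨0, h0⟩) h
  simp [Matrix.one_apply_eq] at this
  linarith

theorem mk_mul_mk {n : ℕ} (a b : Fin n → ℝ) (A B : GL (Fin n) ℝ) :
    Aff.mk a A * Aff.mk b B = Aff.mk (a + (A : Matrix (Fin n) (Fin n) ℝ) *ᵥ b) (A * B) := rfl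

/-- group-theoretic characterization of translations in `Γₙ⁻`. -/
theorem lin_one_iff_group {n : ℕ} (hn : 2 ≤ n) {γ : Aff n} (hγ : γ ∈ GammaMinus n) :
    γ.lin = 1 ↔ (γ = 1 ∨ γ * γ ≠ 1) := by
  rw [mem_GammaMinus] at hγ
  obtain ⟨v, A⟩ := γ
  obtain ⟨hv, hA | hA⟩ := hγ <;> simp only at hA <;> subst hA
  · simp only [true_iff]
    by_cases hv0 : v = 0
    · left; subst hv0; rfl
    · right
      intro h
      rw [mk_mul_mk] at h
      have := congrArg Aff.tr h
      simp only [Aff.one_def, Units.val_one, Matrix.one_mulVec] at this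
      apply hv0
      have : v + v = 0 := this
      funext i
      have := congrFun this i
      simp only [Pi.add_apply, Pi.zero_apply] at this
      show v i = (0 : Fin n → ℝ) i
      simp only [Pi.zero_apply]
      linarith
  · constructor
    · intro h; exact absurd h.symm (fun h' => negOne_ne_one hn h'.symm)
    · rintro (h | h)
      · exact absurd (congrArg Aff.lin h) (by simp [Aff.one_def]; exact negOne_ne_one hn)
      · exfalso
        apply h
        rw [mk_mul_mk]
        ext i
        · simp [Aff.one_def, Units.val_neg, Matrix.neg_mulVec]
        · simp [Aff.one_def]

theorem Tmem {n : ℕ} (z : Fin n → ℤ) : Aff.mk (fun i => (z i : ℝ)) 1 ∈ GammaMinus n :=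
  (mem_GammaMinus _).mpr ⟨fun i => ⟨z i, rfl⟩, Or.inl rfl⟩

def Tgamma {n : ℕ} (z : Fin n → ℤ) : GammaMinus n := ⟨Aff.mk (fun i => (z i : ℝ)) 1, Tmem z⟩

theorem phi_lin_one {n : ℕ} (hn : 2 ≤ n) (φ : (GammaMinus n) ≃* (GammaMinus n))
    (x : GammaMinus n) :
    ((φ x : GammaMinus n) : Aff n).lin = 1 ↔ ((x : GammaMinus n) : Aff n).lin = 1 := by
  rw [lin_one_iff_group hn (φ x).2, lin_one_iff_group hn x.2]
  have hφ1 : ∀ y : GammaMinus n, φ y = 1 ↔ y = 1 := fun y =>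
    ⟨fun h => φ.injective (h.trans (_root_.map_one φ).symm), fun h => h ▸ _root_.map_one φ⟩
  have h1 : ((φ x : GammaMinus n) : Aff n) = 1 ↔ ((x : GammaMinus n) : Aff n) = 1 := by
    rw [OneMemClass.coe_eq_one, OneMemClass.coe_eq_one, hφ1]
  have h2 : ((φ x : GammaMinus n) : Aff n) * ((φ x : GammaMinus n) : Aff n) = 1 ↔
      ((x : GammaMinus n) : Aff n) * ((x : GammaMinus n) : Aff n) = 1 := by
    rw [← Subgroup.coe_mul, ← Subgroup.coe_mul, ← _root_.map_mul,
      OneMemClass.coe_eq_one, OneMemClass.coe_eq_one, hφ1]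
  simp only [ne_eq, h1, h2]

theorem translation_matrix {n : ℕ} (hn : 2 ≤ n) (φ : (GammaMinus n) ≃* (GammaMinus n)) :
    ∃ M : Matrix (Fin n) (Fin n) ℝ, (∀ i j, ∃ c : ℤ, M i j = (c : ℝ)) ∧
      ∀ z : Fin n → ℤ,
        ((φ (Tgamma z) : GammaMinus n) : Aff n) = Aff.mk (M *ᵥ fun i => (z i : ℝ)) 1 := by
  classical
  set u : (Fin n → ℤ) → (Fin n → ℝ) := fun z => ((φ (Tgamma z) : GammaMinus n) : Aff n).tr
    with hu
  have hlin : ∀ z, ((φ (Tgamma z) : GammaMinus n) : Aff n).lin = 1 := fun z =>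
    (phi_lin_one hn φ (Tgamma z)).mpr rfl
  have hval : ∀ z, ((φ (Tgamma z) : GammaMinus n) : Aff n) = Aff.mk (u z) 1 := fun z =>
    Aff.ext rfl (hlin z)
  have Tadd : ∀ z w : Fin n → ℤ, Tgamma (z + w) = Tgamma z * Tgamma w := by
    intro z w
    apply Subtype.ext
    show Aff.mk _ 1 = Aff.mk _ 1 * Aff.mk _ 1
    rw [mk_mul_mk]
    ext i
    · push_cast; simp
    · simp
  have uadd : ∀ z w, u (z + w) = u z + u w := by
    intro z w
    have h1 : φ (Tgamma (z + w)) = φ (Tgamma z) * φ (Tgamma w) := by rw [Tadd]; exact _root_.map_mul φ _ _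
    calc u (z + w) = ((φ (Tgamma z) * φ (Tgamma w) : GammaMinus n) : Aff n).tr := by
          rw [hu]; simp only; rw [h1]
      _ = (Aff.mk (u z) 1 * Aff.mk (u w) 1).tr := by rw [Subgroup.coe_mul, hval, hval]
      _ = u z + u w := by rw [mk_mul_mk]; simp
  set U : (Fin n → ℤ) →+ (Fin n → ℝ) := AddMonoidHom.mk' u uadd with hU
  set e : Fin n → (Fin n → ℤ) := fun j k => if k = j then 1 else 0 with he
  have hdecomp : ∀ z : Fin n → ℤ, z = ∑ j, z j • e j := by
    intro z
    funext i
    rw [Finset.sum_apply]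
    simp [he, mul_ite]
  refine ⟨Matrix.of (fun i j => u (e j) i), ?_, ?_⟩
  · intro i j
    have := (mem_GammaMinus _).mp (φ (Tgamma (e j))).2
    rw [hval] at this
    exact this.1 i
  · intro z
    rw [hval]
    congr 1
    have key : u z = ∑ j, z j • u (e j) := by
      conv_lhs => rw [hdecomp z]
      rw [show u (∑ j, z j • e j) = U (∑ j, z j • e j) from rfl, map_sum]
      refine Finset.sum_congr rfl fun j _ => ?_
      rw [map_zsmul]
      rfl
    funext i
    rw [key, Finset.sum_apply]
    simp only [Matrix.mulVec, dotProduct, Matrix.of_apply]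
    refine Finset.sum_congr rfl fun j _ => ?_
    rw [Pi.smul_apply, zsmul_eq_mul, mul_comm]

theorem cast_indicator {n : ℕ} (j : Fin n) :
    (fun k => (((if k = j then 1 else 0 : ℤ)) : ℝ)) = fun k => if k = j then (1:ℝ) else 0 := by
  funext k; split <;> simp

theorem part2 {n : ℕ} (hn : 2 ≤ n) (φ : (GammaMinus n) ≃* (GammaMinus n)) :
    ∃ g : Aff n, IsIntegralGL g.lin ∧ (∀ i, ∃ z : ℤ, 2 * g.tr i = (z : ℝ)) ∧
      ∀ γ : GammaMinus n, ((φ γ : GammaMinus n) : Aff n) = g * (γ : Aff n) * g⁻¹ := by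
  classical
  obtain ⟨M, hMint, hM⟩ := translation_matrix hn φ
  obtain ⟨M', hM'int, hM'⟩ := translation_matrix hn φ.symm
  set e : Fin n → (Fin n → ℤ) := fun j k => if k = j then 1 else 0 with he
  -- M * M' = 1
  have hcomp : ∀ (ψ ψ' : (GammaMinus n) ≃* (GammaMinus n)) (N N' : Matrix (Fin n) (Fin n) ℝ),
      (∀ i j, ∃ c : ℤ, N' i j = (c : ℝ)) →
      (∀ z : Fin n → ℤ, ((ψ (Tgamma z) : GammaMinus n) : Aff n) = Aff.mk (N *ᵥ fun i => (z i : ℝ)) 1) →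
      (∀ z : Fin n → ℤ, ((ψ' (Tgamma z) : GammaMinus n) : Aff n) = Aff.mk (N' *ᵥ fun i => (z i : ℝ)) 1) →
      (∀ x, ψ (ψ' x) = x) → N * N' = 1 := by
    intro ψ ψ' N N' hN'int hN hN' hinv
    ext i j
    have hiv : IntVec (N' *ᵥ fun k => ((e j k : ℤ) : ℝ)) :=
      IntVec.mulVec hN'int (fun k => ⟨e j k, rfl⟩)
    obtain ⟨w, hw⟩ := (intVec_iff _).mp hiv
    have hψ' : ψ' (Tgamma (e j)) = Tgamma w := by
      apply Subtype.ext
      rw [hN']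
      show Aff.mk _ 1 = Aff.mk _ 1
      rw [hw]
    have step : ((ψ (Tgamma w) : GammaMinus n) : Aff n) = (Tgamma (e j) : Aff n) := by
      rw [← hψ', hinv]
    rw [hN w] at step
    have htr := congrArg Aff.tr step
    simp only at htr
    have : N *ᵥ (N' *ᵥ fun k => ((e j k : ℤ) : ℝ)) = fun k => ((e j k : ℤ) : ℝ) := by
      rw [hw]; exact htr
    rw [Matrix.mulVec_mulVec] at this
    have := congrFun this i
    rw [he] at this
    simp only [cast_indicator] at this
    rw [mulVec_indicator] at this
    simp only [this, Matrix.one_apply]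
    push_cast
    split <;> simp_all
  have hMM' : M * M' = 1 :=
    hcomp φ φ.symm M M' hM'int hM hM' (fun x => φ.apply_symm_apply x)
  have hM'M : M' * M = 1 :=
    hcomp φ.symm φ M' M hMint hM' hM (fun x => φ.symm_apply_apply x)
  set D : GL (Fin n) ℝ := ⟨M, M', hMM', hM'M⟩ with hD
  -- image of the flip
  set ρ : GammaMinus n := φ ⟨Aff.mk 0 (-1), flip_mem⟩ with hρ
  have hρlin : ((ρ : GammaMinus n) : Aff n).lin = -1 := by
    have hmem := (mem_GammaMinus _).mp ρ.2
    rcases hmem.2 with h | h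
    · exfalso
      have := (phi_lin_one hn φ ⟨Aff.mk 0 (-1), flip_mem⟩).mp h
      exact negOne_ne_one hn this
    · exact h
  obtain ⟨bz, hbz⟩ := (intVec_iff _).mp ((mem_GammaMinus _).mp ρ.2).1
  refine ⟨Aff.mk (fun i => (bz i : ℝ) / 2) D, ⟨?_, ?_⟩, ?_, ?_⟩
  · intro i j
    exact hMint i j
  · intro i j
    exact hM'int i j
  · intro i
    exact ⟨bz i, by simp only; ring⟩
  · intro γ
    obtain ⟨hv, hA | hA⟩ := (mem_GammaMinus _).mp γ.2
    · -- translation case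
      obtain ⟨z, hz⟩ := (intVec_iff _).mp hv
      have hγ : γ = Tgamma z := by
        apply Subtype.ext
        show (γ : Aff n) = Aff.mk _ 1
        exact Aff.ext hz hA
      have hcoe : ((Tgamma z : GammaMinus n) : Aff n) = Aff.mk (fun i => ((z i : ℤ) : ℝ)) 1 := rfl
      rw [hγ, hM z, hcoe, conj_translation]
    · -- flip case
      obtain ⟨z, hz⟩ := (intVec_iff _).mp hv
      have hγ : γ = Tgamma z * ⟨Aff.mk 0 (-1), flip_mem⟩ := by
        apply Subtype.ext
        rw [Subgroup.coe_mul]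
        show (γ : Aff n) = Aff.mk _ 1 * Aff.mk _ (-1)
        rw [mk_mul_mk]
        refine Aff.ext ?_ (by simp [hA])
        rw [hz]; simp
      have hφγ : ((φ γ : GammaMinus n) : Aff n) =
          Aff.mk ((M *ᵥ fun i => (z i : ℝ)) + ((ρ : GammaMinus n) : Aff n).tr) (-1) := by
        rw [hγ, _root_.map_mul, Subgroup.coe_mul, hM z, ← hρ]
        have hρval : ((ρ : GammaMinus n) : Aff n) =
            Aff.mk ((ρ : GammaMinus n) : Aff n).tr (-1) := Aff.ext rfl hρlin
        rw [hρval, mk_mul_mk]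
        exact Aff.ext (by simp) (by simp)
      rw [hφγ]
      have hc := conj_flip (Aff.mk (fun i => (bz i : ℝ) / 2) D) (γ : Aff n).tr
      have hγtr : (γ : Aff n) = Aff.mk (γ : Aff n).tr (-1) := Aff.ext rfl hA
      rw [hγtr] at hc ⊢
      rw [hc]
      refine Aff.ext ?_ rfl
      show M *ᵥ (fun i => (z i : ℝ)) + _ = _
      rw [hz, hbz]
      funext i
      simp only [Pi.add_apply]
      have : (fun i => (bz i : ℝ) / 2) i + (fun i => (bz i : ℝ) / 2) i = (bz i : ℝ) := by ring
      show (M *ᵥ fun i => (z i:ℝ)) i + (bz i : ℝ) =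
        ((fun i => (bz i : ℝ) / 2) + (fun i => (bz i : ℝ) / 2) + (M *ᵥ fun i => (z i:ℝ))) i
      simp only [Pi.add_apply]
      ring

/-- For `Γₙ⁻ = ⟨ℤⁿ, (0,-Iₙ)⟩`, `n ≥ 2`: the map `ξ_{(d,D)}` is an automorphism of `Γₙ⁻`
iff `D ∈ GLₙ(ℤ)` and `2d ∈ ℤⁿ`; moreover every automorphism of `Γₙ⁻` is of this form. -/
theorem stmt15 {n : ℕ} (hn : 2 ≤ n) :
    (∀ g : Aff n, XiIsAut g (GammaMinus n) ↔
        (IsIntegralGL g.lin ∧ ∀ i, ∃ z : ℤ, 2 * g.tr i = (z : ℝ))) ∧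
    (∀ φ : (GammaMinus n) ≃* (GammaMinus n),
      ∃ g : Aff n, IsIntegralGL g.lin ∧ (∀ i, ∃ z : ℤ, 2 * g.tr i = (z : ℝ)) ∧
        ∀ γ : GammaMinus n, ((φ γ : GammaMinus n) : Aff n) = g * (γ : Aff n) * g⁻¹) := by
  exact ⟨fun g => part1 hn g, part2 hn⟩
end
end

section
/- For every n ≥ 2, the free abelian group ℤⁿ has full Reidemeister spectrum: Spec_R(ℤⁿ) = ℕ ∪ {∞}, i.e. for every k ∈ ℕ ∪ {∞} there exists an automorphism φ of ℤⁿ with R(φ) = k. -/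
open Matrix

noncomputable section

/-!
For abelian `G`, `g` and `g'` are `φ`-twisted conjugate iff `g / g'` lies in the image of
`h ↦ h / φ h`, so the Reidemeister classes are the cosets of that image. The identity therefore
has infinitely many classes on `ℤⁿ`. For `m ≥ 1`, let `ψ` be the cyclic shift of coordinates
followed by the transvection subtracting `m * x 1` from the last coordinate. The coordinate sum
of `x - ψ x` is `m * x 1`; conversely, any `y` whose coordinate sum is `m * t` is `x - ψ x` for
the `x` with `x 1 = t` obtained by summing `y` around the cycle. Hence the coordinate sum modulo `m`
identifies the Reidemeister classes of `ψ` with `ZMod m`.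
-/

section Reidemeister

variable {G : Type*}

lemma reidemeisterNumber_ne_zero [Group G] (φ : G →* G) : reidemeisterNumber φ ≠ 0 := by
  rw [reidemeisterNumber, Ne, ENat.card_eq_zero_iff_empty, not_isEmpty_iff]
  exact ⟨Quot.mk _ 1⟩

lemma reidemeisterNumber_eq_card_of_surjective [Group G] {Q : Type*} (φ : G →* G) {f : G → Q}
    (hf : Function.Surjective f) (hφ : ∀ g g', twistedConj φ g g' ↔ f g = f g') :
    reidemeisterNumber φ = ENat.card Q := by
  refine ENat.card_congr <| Equiv.ofBijective (Quot.lift f fun g g' h => (hφ g g').1 h) ⟨?_, ?_⟩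
  · exact Quot.ind fun g => Quot.ind fun g' h => Quot.sound ((hφ g g').2 h)
  · intro q
    obtain ⟨g, rfl⟩ := hf q
    exact ⟨Quot.mk _ g, rfl⟩

lemma twistedConj_id_iff [CommGroup G] {g g' : G} :
    twistedConj (MonoidHom.id G) g g' ↔ g = g' := by
  constructor
  · rintro ⟨h, rfl⟩
    simp [mul_comm h]
  · rintro rfl
    exact ⟨1, by simp⟩

lemma reidemeisterNumber_id [CommGroup G] :
    reidemeisterNumber (MonoidHom.id G) = ENat.card G :=
  reidemeisterNumber_eq_card_of_surjective _ Function.surjective_id fun _ _ => twistedConj_id_iff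

lemma twistedConj_iff_exists_sub {A : Type*} [AddCommGroup A]
    (φ : Multiplicative A →* Multiplicative A) {g g' : Multiplicative A} :
    twistedConj φ g g' ↔ ∃ c : A, g.toAdd - g'.toAdd = c - (φ (.ofAdd c)).toAdd := by
  constructor
  · rintro ⟨h, rfl⟩
    exact ⟨h.toAdd, by simp only [toAdd_mul, toAdd_inv, ofAdd_toAdd]; abel⟩
  · rintro ⟨c, hc⟩
    refine ⟨.ofAdd c, Multiplicative.toAdd.injective ?_⟩
    simp only [sub_eq_iff_eq_add.mp hc, toAdd_mul, toAdd_ofAdd, toAdd_inv]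
    abel

end Reidemeister

lemma exists_sub_comp_finRotate_eq {M : Type*} [AddCommGroup M] {n : ℕ} (z : Fin (n + 1) → M)
    (hz : ∑ i, z i = 0) : ∃ c : Fin (n + 1) → M, c - c ∘ finRotate (n + 1) = z := by
  refine ⟨fun i => -Fin.partialSum (fun j => z j.castSucc) i, funext fun i => ?_⟩
  induction i using Fin.lastCases with
  | last =>
    rw [Fin.sum_univ_castSucc, add_eq_zero_iff_neg_eq] at hz
    simp [finRotate_apply, Fin.partialSum, List.take_of_length_le, List.sum_ofFn, hz]
  | cast i => simp [finRotate_apply, Fin.coeSucc_eq_succ, Fin.partialSum_succ]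

def shiftTransvection (k : ℕ) (m : ℤ) : (Fin (k + 2) → ℤ) ≃ₗ[ℤ] (Fin (k + 2) → ℤ) :=
  (LinearEquiv.funCongrLeft ℤ ℤ (finRotate (k + 2))).trans
    (LinearEquiv.transvection (f := -m • LinearMap.proj 0) (v := Pi.single (Fin.last _) 1)
      (by simp))

lemma shiftTransvection_apply (k : ℕ) (m : ℤ) (x : Fin (k + 2) → ℤ) :
    shiftTransvection k m x = x ∘ finRotate (k + 2) - Pi.single (Fin.last _) (m * x 1) := by
  ext i
  simp [shiftTransvection, LinearMap.transvection.apply, LinearMap.funLeft_apply, finRotate_apply,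
    Pi.single_apply, ← sub_eq_add_neg]

lemma sum_sub_shiftTransvection (k : ℕ) (m : ℤ) (c : Fin (k + 2) → ℤ) :
    ∑ i, (c - shiftTransvection k m c) i = m * c 1 := by
  have hrot : ∑ i, c (i + 1) = ∑ i, c i := Equiv.sum_comp (Equiv.addRight 1) c
  simp [shiftTransvection_apply, Finset.sum_sub_distrib, hrot]

lemma exists_sub_shiftTransvection_eq_iff (k : ℕ) (m : ℤ) (y : Fin (k + 2) → ℤ) :
    (∃ c, c - shiftTransvection k m c = y) ↔ m ∣ ∑ i, y i := by
  constructor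
  · rintro ⟨c, rfl⟩
    exact ⟨c 1, sum_sub_shiftTransvection k m c⟩
  · rintro ⟨t, ht⟩
    obtain ⟨c, hc⟩ := exists_sub_comp_finRotate_eq (y - Pi.single (Fin.last _) (m * t))
      (by simp [Finset.sum_sub_distrib, ht])
    refine ⟨c + fun _ => t - c 1, funext fun i => ?_⟩
    have hci := congrFun hc i
    simp only [Pi.sub_apply, Function.comp_apply, finRotate_apply] at hci
    simp only [shiftTransvection_apply, Pi.add_apply, add_sub_cancel, Pi.sub_apply,
      Function.comp_apply, finRotate_apply]
    linarith

lemma reidemeisterNumber_shiftTransvection (k m : ℕ) [NeZero m] :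
    reidemeisterNumber
      ((shiftTransvection k m).toAddEquiv.toMultiplicative :
        Multiplicative (Fin (k + 2) → ℤ) →* Multiplicative (Fin (k + 2) → ℤ)) = m := by
  rw [reidemeisterNumber_eq_card_of_surjective _ (f := fun g => ((∑ i, g.toAdd i : ℤ) : ZMod m))]
  · simp [ENat.card_eq_coe_fintype_card]
  · intro q
    obtain ⟨a, rfl⟩ := ZMod.intCast_surjective q
    exact ⟨.ofAdd (Pi.single 0 a), by simp⟩
  · intro g g'
    rw [twistedConj_iff_exists_sub, eq_comm, ZMod.intCast_eq_intCast_iff_dvd_sub,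
      ← Finset.sum_sub_distrib, ← exists_sub_shiftTransvection_eq_iff]
    exact exists_congr fun _ => eq_comm

/-- For `n ≥ 2`, the free abelian group `ℤⁿ` has full Reidemeister spectrum
`ℕ ∪ {∞}` (all positive integers together with `∞`, i.e. all nonzero values). -/
theorem stmt19 (n : ℕ) (hn : 2 ≤ n) :
    reidemeisterSpectrum (Multiplicative (Fin n → ℤ)) = {r : ℕ∞ | r ≠ 0} := by
  obtain ⟨k, rfl⟩ := Nat.exists_eq_add_of_le' hn
  ext r
  refine ⟨fun ⟨φ, hφ⟩ => hφ ▸ reidemeisterNumber_ne_zero _, fun hr => ?_⟩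
  induction r using ENat.recTopCoe with
  | top =>
    refine ⟨MulEquiv.refl _, ?_⟩
    rw [MulEquiv.coe_monoidHom_refl, reidemeisterNumber_id, ENat.card_eq_top_of_infinite]
  | coe m =>
    have : NeZero m := ⟨by rintro rfl; exact hr rfl⟩
    exact ⟨_, reidemeisterNumber_shiftTransvection k m⟩
end
end
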